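/- arXiv:2003.09345 — 2 statements merged into one kernel-verified Lean document; each statement's English description precedes it below -/
import Mathlib

section
/- Let 0 < λ < 1, let Δ, γ : ℝ → ℝ be C¹ functions with Δ(0) = λ and γ(0) = ξ∞ ≠ 0, and let (ηₙ)_{n≥1} be a sequence of real numbers with ηₙ → 0 satisfying ηₙ = Δ(γ(ηₙ)·ηₙ)ⁿ · γ(ηₙ) for every n ≥ 1. Then there exist a constant C > 0 and an index n₀ such that for all n ≥ n₀: |γ(ηₙ) − ξ∞| ≤ C·λⁿ and |ηₙ − ξ∞·λⁿ| ≤ C·n·λ^{2n}. -/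
/-!
Writing `ξₙ = γ(ηₙ)` and `dₙ = Δ(ξₙηₙ)`, differentiability at `0` gives `ξₙ - ξ∞ = O(ηₙ)` and
`dₙ - λ = O(ηₙ)`, while `ηₙ = dₙⁿ ξₙ`. Since `dₙ → λ`, a priori `ηₙ = O(μⁿ)` for any `μ ∈ (λ, 1)`.
The bound `|aⁿ - λⁿ| ≤ n |a - λ| (λ + |a - λ|)ⁿ⁻¹` together with `(1 + t)ⁿ ≤ exp (n t)` shows
`dₙⁿ = λⁿ + O(n λⁿ ρₙ)` whenever `dₙ - λ = O(ρₙ)` with `n ρₙ → 0`. Applied with `ρₙ = μⁿ` this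
bootstraps to `ηₙ = O(λⁿ)`, hence `ξₙ - ξ∞ = O(λⁿ)`; applied again with `ρₙ = λⁿ` it gives
`ηₙ - ξ∞ λⁿ = (dₙⁿ - λⁿ) ξₙ + λⁿ (ξₙ - ξ∞) = O(n λ²ⁿ)`.
-/

open Filter Asymptotics Topology

lemma add_pow_le_pow_mul_exp {lam : ℝ} (hlam : 0 < lam) {a : ℝ} (ha : 0 ≤ a) (n : ℕ) :
    (lam + a) ^ n ≤ lam ^ n * Real.exp (n * a / lam) := by
  calc (lam + a) ^ n = lam ^ n * (a / lam + 1) ^ n := by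
        rw [← mul_pow]; congr 1; field_simp; ring
    _ ≤ lam ^ n * Real.exp (a / lam) ^ n := by
        gcongr
        exact Real.add_one_le_exp _
    _ = lam ^ n * Real.exp (n * a / lam) := by rw [← Real.exp_nat_mul, mul_div_assoc]

theorem DifferentiableAt.isBigO_comp_sub_of_tendsto {𝕜 E F α : Type*}
    [NontriviallyNormedField 𝕜] [NormedAddCommGroup E] [NormedSpace 𝕜 E]
    [NormedAddCommGroup F] [NormedSpace 𝕜 F] {f : E → F} (hf : DifferentiableAt 𝕜 f 0)
    {l : Filter α} {u : α → E} (hu : Tendsto u l (𝓝 0)) :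
    (fun a => f (u a) - f 0) =O[l] u := by
  simpa only [Function.comp_def, sub_zero] using hf.isBigO_sub.comp_tendsto hu

theorem isBigO_natCast_mul_self (f : ℕ → ℝ) : f =O[atTop] fun n => n * f n := by
  refine IsBigO.of_bound 1 ?_
  filter_upwards [eventually_ge_atTop 1] with n hn
  rw [one_mul, norm_mul, Real.norm_natCast]
  exact le_mul_of_one_le_left (norm_nonneg _) (by exact_mod_cast hn)

theorem isBigO_pow_self_of_tendsto {a : ℕ → ℝ} {l μ : ℝ} (ha : Tendsto a atTop (𝓝 l))
    (hlμ : |l| < μ) : (fun n => a n ^ n) =O[atTop] fun n => μ ^ n := by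
  refine IsBigO.of_bound 1 ?_
  filter_upwards [ha.abs.eventually (eventually_le_nhds hlμ)] with n hn
  rw [one_mul, norm_pow, norm_pow, Real.norm_eq_abs, Real.norm_eq_abs,
    abs_of_pos ((abs_nonneg l).trans_lt hlμ)]
  exact pow_le_pow_left₀ (abs_nonneg _) hn n

theorem isBigO_pow_self_sub_pow {lam : ℝ} (hlam : 0 < lam) {a ρ : ℕ → ℝ}
    (ha : (fun n => a n - lam) =O[atTop] ρ)
    (hρ : Tendsto (fun n => n * ρ n) atTop (𝓝 0)) :
    (fun n => a n ^ n - lam ^ n) =O[atTop] fun n => n * lam ^ n * ρ n := by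
  obtain ⟨c, hc, hca⟩ := ha.exists_pos
  have hsmall : ∀ᶠ n : ℕ in atTop, n * |ρ n| ≤ 1 := by
    filter_upwards [hρ.abs.eventually (eventually_le_nhds (by norm_num : |(0 : ℝ)| < 1))]
      with n hn
    simpa [abs_mul] using hn
  refine IsBigO.of_bound (c * Real.exp (c / lam) / lam) ?_
  filter_upwards [hca.bound, hsmall, eventually_ge_atTop 1] with n hn hnρ hn1
  obtain ⟨k, rfl⟩ : ∃ k, n = k + 1 := ⟨n - 1, by omega⟩
  rw [Real.norm_eq_abs, Real.norm_eq_abs] at hn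
  have hmax : max |a (k + 1)| |lam| ≤ lam + c * |ρ (k + 1)| := by
    rw [abs_of_pos hlam]
    refine max_le ?_ (by nlinarith [abs_nonneg (ρ (k + 1))])
    linarith [abs_sub_abs_le_abs_sub (a (k + 1)) lam, abs_of_pos hlam]
  have hexp : (lam + c * |ρ (k + 1)|) ^ k ≤ lam ^ k * Real.exp (c / lam) := by
    refine (add_pow_le_pow_mul_exp hlam (by positivity) k).trans ?_
    gcongr
    have : (k : ℝ) * |ρ (k + 1)| ≤ 1 := by
      refine le_trans ?_ hnρ
      gcongr
      linarith
    calc (k : ℝ) * (c * |ρ (k + 1)|) = c * (k * |ρ (k + 1)|) := by ring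
      _ ≤ c * 1 := by gcongr
      _ = c := mul_one c
  calc ‖a (k + 1) ^ (k + 1) - lam ^ (k + 1)‖
      ≤ |a (k + 1) - lam| * (k + 1 : ℕ) * max |a (k + 1)| |lam| ^ k :=
        abs_pow_sub_pow_le _ _ _
    _ ≤ (c * |ρ (k + 1)|) * (k + 1 : ℕ) * (lam ^ k * Real.exp (c / lam)) := by
        gcongr
        exact (pow_le_pow_left₀ (by positivity) hmax k).trans hexp
    _ = c * Real.exp (c / lam) / lam * ‖((k + 1 : ℕ) : ℝ) * lam ^ (k + 1) * ρ (k + 1)‖ := by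
        rw [Real.norm_eq_abs, abs_mul, abs_mul, abs_of_pos (pow_pos hlam _), Nat.abs_cast,
          pow_succ]
        field_simp

theorem isBigO_pow_self_of_sub_isBigO {lam : ℝ} (hlam : 0 < lam) {a ρ : ℕ → ℝ}
    (ha : (fun n => a n - lam) =O[atTop] ρ)
    (hρ : Tendsto (fun n => n * ρ n) atTop (𝓝 0)) :
    (fun n => a n ^ n) =O[atTop] fun n => lam ^ n := by
  have hsmall : (fun n : ℕ => n * lam ^ n * ρ n) =O[atTop] fun n => lam ^ n := by
    simpa [mul_comm, mul_left_comm, mul_assoc] using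
      (isBigO_refl (fun n => lam ^ n) atTop).mul (hρ.isBigO_one ℝ)
  simpa using ((isBigO_pow_self_sub_pow hlam ha hρ).trans hsmall).add (isBigO_refl _ atTop)

section PowMulSystem

variable {lam : ℝ} {d ξ η : ℕ → ℝ}

theorem isBigO_pow_of_eventuallyEq_pow_self_mul (hlam0 : 0 < lam) (hlam1 : lam < 1)
    (hd : Tendsto d atTop (𝓝 lam)) (hdη : (fun n => d n - lam) =O[atTop] η)
    (hξ : ξ =O[atTop] fun _ => (1 : ℝ)) (hη : η =ᶠ[atTop] fun n => d n ^ n * ξ n) :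
    η =O[atTop] fun n => lam ^ n := by
  -- any rate `μ ∈ (λ, 1)` serves for the a priori bound that starts the bootstrap
  have hημ : η =O[atTop] fun n => ((1 + lam) / 2) ^ n := by
    have hlμ : |lam| < (1 + lam) / 2 := by rw [abs_of_pos hlam0]; linarith
    simpa using hη.trans_isBigO ((isBigO_pow_self_of_tendsto hd hlμ).mul hξ)
  have hdpow := isBigO_pow_self_of_sub_isBigO hlam0 (hdη.trans hημ)
    (tendsto_self_mul_const_pow_of_lt_one (by linarith) (by linarith))
  simpa using hη.trans_isBigO (hdpow.mul hξ)

theorem isBigO_sub_mul_pow_of_eventuallyEq_pow_self_mul {c : ℝ} (hlam0 : 0 < lam)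
    (hlam1 : lam < 1) (hd : (fun n => d n - lam) =O[atTop] fun n => lam ^ n)
    (hξ : ξ =O[atTop] fun _ => (1 : ℝ)) (hξc : (fun n => ξ n - c) =O[atTop] fun n => lam ^ n)
    (hη : η =ᶠ[atTop] fun n => d n ^ n * ξ n) :
    (fun n => η n - c * lam ^ n) =O[atTop] fun n => n * lam ^ (2 * n) := by
  have hsplit : (fun n => η n - c * lam ^ n) =ᶠ[atTop]
      fun n => (d n ^ n - lam ^ n) * ξ n + lam ^ n * (ξ n - c) :=
    hη.mono fun n hn => by beta_reduce at hn ⊢; rw [hn]; ring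
  have hfirst : (fun n => (d n ^ n - lam ^ n) * ξ n) =O[atTop] fun n => n * lam ^ (2 * n) := by
    refine ((isBigO_pow_self_sub_pow hlam0 hd
      (tendsto_self_mul_const_pow_of_lt_one hlam0.le hlam1)).mul hξ).congr_right fun n => ?_
    ring
  have hsecond : (fun n => lam ^ n * (ξ n - c)) =O[atTop] fun n => n * lam ^ (2 * n) := by
    refine (((isBigO_refl _ atTop).mul hξc).congr_right fun n => ?_).trans
      (isBigO_natCast_mul_self _)
    ring
  exact hsplit.trans_isBigO (hfirst.add hsecond)

end PowMulSystem

theorem exists_pos_bound_of_isBigO {f₁ f₂ g₁ g₂ : ℕ → ℝ} (h₁ : f₁ =O[atTop] g₁)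
    (h₂ : f₂ =O[atTop] g₂) :
    ∃ C : ℝ, 0 < C ∧ ∃ n₀ : ℕ, ∀ n, n₀ ≤ n → |f₁ n| ≤ C * |g₁ n| ∧ |f₂ n| ≤ C * |g₂ n| := by
  obtain ⟨c₁, hc₁, hb₁⟩ := h₁.exists_pos
  obtain ⟨c₂, hc₂, hb₂⟩ := h₂.exists_pos
  refine ⟨max c₁ c₂, lt_max_of_lt_left hc₁, eventually_atTop.mp ?_⟩
  filter_upwards [hb₁.bound, hb₂.bound] with n hn₁ hn₂
  simp only [Real.norm_eq_abs] at hn₁ hn₂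
  exact ⟨hn₁.trans (by gcongr; exact le_max_left _ _),
    hn₂.trans (by gcongr; exact le_max_right _ _)⟩

theorem homoclinic_periodic_asymptotics_general (lam xiInf : ℝ) (hlam0 : 0 < lam)
    (hlam1 : lam < 1)
    (Δ γ : ℝ → ℝ) (hΔ : ContDiff ℝ 1 Δ) (hγ : ContDiff ℝ 1 γ)
    (hΔ0 : Δ 0 = lam) (hγ0 : γ 0 = xiInf)
    (η : ℕ → ℝ) (hηlim : Filter.Tendsto η Filter.atTop (nhds 0))
    (hηeq : ∀ n : ℕ, 1 ≤ n → η n = Δ (γ (η n) * η n) ^ n * γ (η n)) :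
    ∃ C : ℝ, 0 < C ∧ ∃ n₀ : ℕ, ∀ n : ℕ, n₀ ≤ n →
      |γ (η n) - xiInf| ≤ C * lam ^ n ∧
      |η n - xiInf * lam ^ n| ≤ C * n * lam ^ (2 * n) := by
  set ξ : ℕ → ℝ := fun n => γ (η n)
  set d : ℕ → ℝ := fun n => Δ (ξ n * η n)
  have hξ : Tendsto ξ atTop (𝓝 xiInf) := hγ0 ▸ (hγ.continuous.tendsto 0).comp hηlim
  have hξη : Tendsto (fun n => ξ n * η n) atTop (𝓝 0) := by simpa using hξ.mul hηlim
  have hξO : (fun n => ξ n - xiInf) =O[atTop] η := by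
    simpa only [hγ0] using (hγ.differentiable one_ne_zero 0).isBigO_comp_sub_of_tendsto hηlim
  have hdO : (fun n => d n - lam) =O[atTop] η := by
    have hξηO : (fun n => ξ n * η n) =O[atTop] η := by
      simpa using (hξ.isBigO_one ℝ).mul (isBigO_refl η atTop)
    simpa only [hΔ0] using
      ((hΔ.differentiable one_ne_zero 0).isBigO_comp_sub_of_tendsto hξη).trans hξηO
  have hd : Tendsto d atTop (𝓝 lam) := hΔ0 ▸ (hΔ.continuous.tendsto 0).comp hξη
  have hηd : η =ᶠ[atTop] fun n => d n ^ n * ξ n := eventually_atTop.mpr ⟨1, hηeq⟩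
  have hη := isBigO_pow_of_eventuallyEq_pow_self_mul hlam0 hlam1 hd hdO (hξ.isBigO_one ℝ) hηd
  have hξrate := hξO.trans hη
  obtain ⟨C, hC, n₀, hn₀⟩ := exists_pos_bound_of_isBigO hξrate
    (isBigO_sub_mul_pow_of_eventuallyEq_pow_self_mul hlam0 hlam1 (hdO.trans hη)
      (hξ.isBigO_one ℝ) hξrate hηd)
  refine ⟨C, hC, n₀, fun n hn => ?_⟩
  simpa [abs_of_pos (pow_pos hlam0 _), mul_assoc] using hn₀ n hn

/-- Asymptotics of the solutions `ηₙ` of the implicit system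
`ηₙ = Δ(γ(ηₙ)ηₙ)ⁿ·γ(ηₙ)`: one has `γ(ηₙ) = xiInf + O(λⁿ)` and
`ηₙ = xiInfλⁿ + O(nλ²ⁿ)`. -/
theorem homoclinic_periodic_asymptotics (lam xiInf : ℝ) (hlam0 : 0 < lam)
    (hlam1 : lam < 1) (hxiInf : xiInf ≠ 0)
    (Δ γ : ℝ → ℝ) (hΔ : ContDiff ℝ 1 Δ) (hγ : ContDiff ℝ 1 γ)
    (hΔ0 : Δ 0 = lam) (hγ0 : γ 0 = xiInf)
    (η : ℕ → ℝ) (hηlim : Filter.Tendsto η Filter.atTop (nhds 0))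
    (hηeq : ∀ n : ℕ, 1 ≤ n → η n = Δ (γ (η n) * η n) ^ n * γ (η n)) :
    ∃ C : ℝ, 0 < C ∧ ∃ n₀ : ℕ, ∀ n : ℕ, n₀ ≤ n →
      |γ (η n) - xiInf| ≤ C * lam ^ n ∧
      |η n - xiInf * lam ^ n| ≤ C * n * lam ^ (2 * n) :=
  homoclinic_periodic_asymptotics_general lam xiInf hlam0 hlam1 Δ γ hΔ hγ hΔ0 hγ0 η hηlim hηeq
end

section
/- Let 0 < λ < 1 and let L : ℕ → ℕ → ℝ be a doubly-indexed family of real numbers such that L(q, p) = 0 whenever q > p, and such that |L(q, p)| ≤ C·Rᵖ for all p, q and some constants C, R > 0. Suppose there exists n₁ such that for every integer n ≥ n₁ the (absolutely convergent) double series Σ_{p=0}^{∞} Σ_{q=0}^{p} L(q, p)·n^q·λ^{n·p} equals 0. Then L(q, p) = 0 for all q ≤ p. -/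
/-!
Group the series by powers of `λⁿ`: its `p`-th term is `Pₚ(n) λ^{np}` for the polynomial
`Pₚ = Σ_{q ≤ p} L(q, p) X^q`. By strong induction on `p`, assume `P₀, …, P_{p-1}` vanish.
Since `p + 1 ≤ 2ᵖ`, the `k`-th term is at most `C yᵏ` with `y = 2Rnλⁿ → 0`, so the vanishing
of the series forces `|Pₚ(n)| λ^{np} ≤ 2C y^{p+1}`, i.e. `|Pₚ(n)| = O(n^{p+1} λⁿ) → 0`.
A real polynomial that tends to `0` along the integers is zero, so `Pₚ = 0`.
-/

open Filter Topology Polynomial Finset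

section GeometricTail

variable {E : Type*} [NormedAddCommGroup E]

theorem norm_tsum_nat_add_le_of_norm_le_geometric {a : ℕ → E} {C y : ℝ} (hy0 : 0 ≤ y)
    (hy : y ≤ 1 / 2) (ha : ∀ k, ‖a k‖ ≤ C * y ^ k) (m : ℕ) :
    ‖∑' k, a (k + m)‖ ≤ 2 * C * y ^ m := by
  have hC : 0 ≤ C := by simpa using (norm_nonneg _).trans (ha 0)
  have hgeom := (hasSum_geometric_of_lt_one hy0 (by linarith)).mul_left (C * y ^ m)
  calc ‖∑' k, a (k + m)‖ ≤ C * y ^ m * (1 - y)⁻¹ :=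
        tsum_of_norm_bounded hgeom fun k => (ha (k + m)).trans_eq (by ring)
    _ ≤ C * y ^ m * 2 := by
        gcongr
        rw [inv_le_comm₀ (by linarith) two_pos]
        linarith
    _ = 2 * C * y ^ m := by ring

theorem norm_le_geometric_of_tsum_eq_zero [CompleteSpace E] {a : ℕ → E} {C y : ℝ}
    (hy0 : 0 ≤ y) (hy : y ≤ 1 / 2) (ha : ∀ k, ‖a k‖ ≤ C * y ^ k)
    (hsum : ∑' k, a k = 0) {m : ℕ} (hlow : ∀ k < m, a k = 0) : ‖a m‖ ≤ 2 * C * y ^ (m + 1) := by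
  have hsummable : Summable a :=
    .of_norm_bounded ((summable_geometric_of_lt_one hy0 (by linarith)).mul_left C) ha
  have hhead : ∑ k ∈ range (m + 1), a k = a m := by
    rw [sum_range_succ, sum_eq_zero fun k hk => hlow k (mem_range.mp hk), zero_add]
  have hsplit := hsummable.sum_add_tsum_nat_add (m + 1)
  rw [hsum, hhead, add_eq_zero_iff_eq_neg] at hsplit
  rw [hsplit, norm_neg]
  exact norm_tsum_nat_add_le_of_norm_le_geometric hy0 hy ha (m + 1)

end GeometricTail

namespace Polynomial

theorem eq_C_of_tendsto_eval_natCast {P : ℝ[X]} {c : ℝ}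
    (h : Tendsto (fun n : ℕ => P.eval (n : ℝ)) atTop (𝓝 c)) : P = C c := by
  have hdeg : P.degree ≤ 0 := by
    by_contra! hdeg
    exact not_tendsto_atTop_of_tendsto_nhds h.abs
      ((abs_tendsto_atTop P hdeg).comp tendsto_natCast_atTop_atTop)
  rw [eq_C_of_degree_le_zero hdeg] at h ⊢
  simp only [eval_C] at h
  rw [tendsto_const_nhds_iff.mp h]

end Polynomial

section RowPoly

variable {A : Type*} [CommSemiring A]

noncomputable def rowPoly (L : ℕ → ℕ → A) (p : ℕ) : A[X] :=
  ∑ q ∈ range (p + 1), monomial q (L q p)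

theorem coeff_rowPoly (L : ℕ → ℕ → A) {q p : ℕ} (hqp : q ≤ p) :
    (rowPoly L p).coeff q = L q p := by
  simp [rowPoly, coeff_monomial, Nat.lt_succ_of_le hqp]

theorem eval_rowPoly_mul (L : ℕ → ℕ → A) (p : ℕ) (x μ : A) :
    (rowPoly L p).eval x * μ = ∑ q ∈ range (p + 1), L q p * x ^ q * μ := by
  simp [rowPoly, eval_finsetSum, sum_mul]

end RowPoly

theorem abs_eval_rowPoly_le {L : ℕ → ℕ → ℝ} {C R x : ℝ} {p : ℕ}
    (hbound : ∀ q, |L q p| ≤ C * R ^ p) (hx : 1 ≤ x) :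
    |(rowPoly L p).eval x| ≤ C * (2 * R * x) ^ p := by
  have hCR : 0 ≤ C * R ^ p := (abs_nonneg _).trans (hbound 0)
  have hx0 : 0 ≤ x := zero_le_one.trans hx
  have hterm : ∀ q ∈ range (p + 1), |L q p * x ^ q| ≤ C * R ^ p * x ^ p := fun q hq => by
    rw [abs_mul, abs_of_nonneg (pow_nonneg hx0 q)]
    exact mul_le_mul (hbound q) (pow_le_pow_right₀ hx (Nat.lt_succ_iff.mp (mem_range.mp hq)))
      (by positivity) hCR
  have hcard : ((p + 1 : ℕ) : ℝ) ≤ 2 ^ p := by exact_mod_cast Nat.lt_two_pow_self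
  calc |(rowPoly L p).eval x| = |∑ q ∈ range (p + 1), L q p * x ^ q| := by
        simpa using congrArg abs (eval_rowPoly_mul L p x 1)
    _ ≤ ∑ q ∈ range (p + 1), C * R ^ p * x ^ p :=
        (abs_sum_le_sum_abs _ _).trans (sum_le_sum hterm)
    _ = ((p + 1 : ℕ) : ℝ) * (C * R ^ p * x ^ p) := by rw [sum_const, card_range, nsmul_eq_mul]
    _ ≤ 2 ^ p * (C * R ^ p * x ^ p) := by gcongr
    _ = C * (2 * R * x) ^ p := by ring

theorem abs_eval_rowPoly_le_of_tsum_eq_zero {L : ℕ → ℕ → ℝ} {C R x μ : ℝ} (hR : 0 ≤ R)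
    (hx : 1 ≤ x) (hμ : 0 < μ) (hsmall : 2 * R * x * μ ≤ 1 / 2)
    (hbound : ∀ q p, |L q p| ≤ C * R ^ p)
    (hsum : ∑' k, (rowPoly L k).eval x * μ ^ k = 0) {p : ℕ}
    (hlow : ∀ k < p, rowPoly L k = 0) :
    |(rowPoly L p).eval x| ≤ 2 * C * (2 * R * x) ^ (p + 1) * μ := by
  have hterm (k : ℕ) : ‖(rowPoly L k).eval x * μ ^ k‖ ≤ C * (2 * R * x * μ) ^ k := by
    rw [Real.norm_eq_abs, abs_mul, abs_of_pos (pow_pos hμ k), mul_pow, ← mul_assoc]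
    exact mul_le_mul_of_nonneg_right (abs_eval_rowPoly_le (hbound · k) hx) (pow_nonneg hμ.le k)
  have hp := norm_le_geometric_of_tsum_eq_zero (by positivity) hsmall hterm hsum (m := p)
    fun k hk => by simp [hlow k hk]
  rw [Real.norm_eq_abs, abs_mul, abs_of_pos (pow_pos hμ p), mul_pow, pow_succ μ] at hp
  refine le_of_mul_le_mul_right ?_ (pow_pos hμ p)
  linarith

theorem coefficients_vanish_of_series_vanish_general (lam : ℝ) (hlam0 : 0 < lam)
    (hlam1 : lam < 1) (L : ℕ → ℕ → ℝ)
    (C R : ℝ) (hR : 0 < R)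
    (hbound : ∀ q p : ℕ, |L q p| ≤ C * R ^ p)
    (n₁ : ℕ) (hvanish : ∀ n : ℕ, n₁ ≤ n →
      ∑' p : ℕ, ∑ q ∈ Finset.range (p + 1), L q p * (n : ℝ) ^ q * lam ^ (n * p) = 0) :
    ∀ q p : ℕ, q ≤ p → L q p = 0 := by
  suffices hrow : ∀ p, rowPoly L p = 0 by
    intro q p hqp
    rw [← coeff_rowPoly L hqp, hrow, coeff_zero]
  have hsum (n : ℕ) (hn : n₁ ≤ n) :
      ∑' k, (rowPoly L k).eval (n : ℝ) * (lam ^ n) ^ k = 0 := by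
    simpa only [eval_rowPoly_mul, ← pow_mul] using hvanish n hn
  have hsmall : ∀ᶠ n : ℕ in atTop, 2 * R * n * lam ^ n ≤ 1 / 2 := by
    have := (tendsto_pow_const_mul_const_pow_of_lt_one 1 hlam0.le hlam1).const_mul (2 * R)
    simp only [pow_one, mul_zero, ← mul_assoc] at this
    exact this.eventually (ge_mem_nhds (by norm_num))
  intro p
  induction p using Nat.strong_induction_on with
  | _ p ih =>
  rw [(rowPoly L p).eq_C_of_tendsto_eval_natCast (c := 0) ?_, C_0]
  have hlim := (tendsto_pow_const_mul_const_pow_of_lt_one (p + 1) hlam0.le hlam1).const_mul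
    (2 * C * (2 * R) ^ (p + 1))
  rw [mul_zero] at hlim
  refine squeeze_zero_norm' ?_ hlim
  filter_upwards [eventually_ge_atTop n₁, eventually_ge_atTop 1, hsmall] with n hn₁ hn hn_small
  have hbd := abs_eval_rowPoly_le_of_tsum_eq_zero hR.le (by exact_mod_cast hn) (pow_pos hlam0 n)
    hn_small hbound (hsum n hn₁) ih
  rw [Real.norm_eq_abs]
  convert hbd using 1
  ring

/-- Uniqueness of coefficients: if a doubly-indexed family `L(q,p)` (vanishing for
`q > p`, with `|L(q,p)| ≤ C·Rᵖ`) satisfies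
`Σ_{p≥0} Σ_{q=0}^{p} L(q,p)·n^q·λ^{np} = 0` for all large `n`, then all `L(q,p)`
with `q ≤ p` vanish. -/
theorem coefficients_vanish_of_series_vanish (lam : ℝ) (hlam0 : 0 < lam)
    (hlam1 : lam < 1) (L : ℕ → ℕ → ℝ) (hLtri : ∀ q p : ℕ, p < q → L q p = 0)
    (C R : ℝ) (hC : 0 < C) (hR : 0 < R)
    (hbound : ∀ q p : ℕ, |L q p| ≤ C * R ^ p)
    (n₁ : ℕ) (hvanish : ∀ n : ℕ, n₁ ≤ n →
      ∑' p : ℕ, ∑ q ∈ Finset.range (p + 1), L q p * (n : ℝ) ^ q * lam ^ (n * p) = 0) :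
    ∀ q p : ℕ, q ≤ p → L q p = 0 :=
  coefficients_vanish_of_series_vanish_general lam hlam0 hlam1 L C R hR hbound n₁ hvanish
end
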